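/- Let Φ, Ψ, Φ′, Ψ′ be quantum Latin squares of dimension n, let U, V be unitary operators on ℂ^n, let (c_ij) and (d_ij) be families of complex numbers of modulus 1, and let σ, τ be permutations of {0,…,n−1} such that |Φ′_ij⟩ = c_ij · U|Φ_{σ(i),τ(j)}⟩ and |Ψ′_ij⟩ = d_ij · V|Ψ_{σ(i),τ(j)}⟩ for all i,j. Then Φ and Ψ are orthogonal if and only if Φ′ and Ψ′ are orthogonal. -/

import Mathlib

open scoped ComplexConjugate Kronecker

noncomputable section

/-- A quantum Latin square of dimension `n`: an `n × n` array of vectors of `ℂ^n`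
such that every row and every column is an orthonormal basis of `ℂ^n`. -/
def IsQLS (n : ℕ) (Φ : Fin n → Fin n → EuclideanSpace ℂ (Fin n)) : Prop :=
  (∀ i, Orthonormal ℂ (fun j => Φ i j)) ∧
  (∀ i, Submodule.span ℂ (Set.range fun j => Φ i j) = ⊤) ∧
  (∀ j, Orthonormal ℂ (fun i => Φ i j)) ∧
  (∀ j, Submodule.span ℂ (Set.range fun i => Φ i j) = ⊤)

/-- The tensor (Kronecker) product of two vectors of `ℂ^n`, as a vector of `ℂ^n ⊗ ℂ^n`. -/
def tensorVec {n : ℕ} (u v : EuclideanSpace ℂ (Fin n)) :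
    EuclideanSpace ℂ (Fin n × Fin n) :=
  WithLp.toLp 2 (fun p : Fin n × Fin n => u p.1 * v p.2)

/-- Two quantum Latin squares are orthogonal when the family `|Φ_ij⟩ ⊗ |Ψ_ij⟩` is an
orthonormal basis of `ℂ^n ⊗ ℂ^n`. -/
def QLSOrthogonal {n : ℕ} (Φ Ψ : Fin n → Fin n → EuclideanSpace ℂ (Fin n)) : Prop :=
  Orthonormal ℂ (fun p : Fin n × Fin n => tensorVec (Φ p.1 p.2) (Ψ p.1 p.2)) ∧
  Submodule.span ℂ
    (Set.range fun p : Fin n × Fin n => tensorVec (Φ p.1 p.2) (Ψ p.1 p.2)) = ⊤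

/-- The outer product `|u⟩⟨v|` as a matrix. -/
def outerMat {ι : Type*} (u v : ι → ℂ) : Matrix ι ι ℂ :=
  Matrix.of fun x y => u x * (starRingEnd ℂ) (v y)

/-! Among `n²` vectors of `ℂ^n ⊗ ℂ^n`, spanning is automatic once they are orthonormal, so
orthogonality of two squares says that the Gram matrix of the family `|Φ_ij⟩ ⊗ |Ψ_ij⟩` is the
identity. Reindexing by `(σ, τ)` permutes the Gram matrix, the phases `c_ij d_ij` conjugate it by
a unitary diagonal matrix, and `U ⊗ V` leaves it unchanged, since
`⟨u ⊗ v, u' ⊗ v'⟩ = ⟨u, u'⟩ ⟨v, v'⟩`. -/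

section Orthonormal

variable {𝕜 E F ι ι' : Type*} [RCLike 𝕜] [NormedAddCommGroup E] [InnerProductSpace 𝕜 E]
  [NormedAddCommGroup F] [InnerProductSpace 𝕜 F]

theorem orthonormal_comp_equiv_iff {v : ι → E} (e : ι' ≃ ι) :
    Orthonormal 𝕜 (v ∘ e) ↔ Orthonormal 𝕜 v :=
  ⟨fun h => by simpa [Function.comp_def] using h.comp e.symm e.symm.injective,
    fun h => h.comp e e.injective⟩

theorem Orthonormal.smul_of_norm_eq_one {v : ι → E} (hv : Orthonormal 𝕜 v) {c : ι → 𝕜}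
    (hc : ∀ i, ‖c i‖ = 1) : Orthonormal 𝕜 fun i => c i • v i :=
  ⟨fun i => by rw [norm_smul, hc, hv.1, one_mul],
    fun i j hij => by dsimp only; rw [inner_smul_left, inner_smul_right, hv.2 hij, mul_zero, mul_zero]⟩

theorem orthonormal_smul_iff_of_norm_eq_one {v : ι → E} {c : ι → 𝕜} (hc : ∀ i, ‖c i‖ = 1) :
    Orthonormal 𝕜 (fun i => c i • v i) ↔ Orthonormal 𝕜 v := by
  refine ⟨fun h => ?_, fun h => h.smul_of_norm_eq_one hc⟩
  have hc₀ : ∀ i, c i ≠ 0 := fun i => norm_ne_zero_iff.mp (by rw [hc]; exact one_ne_zero)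
  simpa [smul_smul, hc₀] using h.smul_of_norm_eq_one (c := fun i => (c i)⁻¹) (by simp [hc])

theorem orthonormal_iff_of_inner_eq {v : ι → E} {w : ι → F}
    (h : ∀ i j, inner 𝕜 (v i) (v j) = inner 𝕜 (w i) (w j)) :
    Orthonormal 𝕜 v ↔ Orthonormal 𝕜 w := by
  classical
  simp only [orthonormal_iff_ite, h]

end Orthonormal

section TensorVec

variable {n : ℕ}

theorem inner_tensorVec (u v u' v' : EuclideanSpace ℂ (Fin n)) :
    inner ℂ (tensorVec u v) (tensorVec u' v') = inner ℂ u u' * inner ℂ v v' := by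
  simp only [PiLp.inner_apply, RCLike.inner_apply, tensorVec, Fintype.sum_prod_type, Finset.sum_mul_sum, map_mul]
  refine Finset.sum_congr rfl fun x _ => Finset.sum_congr rfl fun y _ => ?_
  ring

theorem tensorVec_smul_smul (a b : ℂ) (u v : EuclideanSpace ℂ (Fin n)) :
    tensorVec (a • u) (b • v) = (a * b) • tensorVec u v := by
  ext p
  simp only [tensorVec, PiLp.toLp_apply, PiLp.smul_apply, smul_eq_mul]
  ring

theorem inner_tensorVec_map (U V : EuclideanSpace ℂ (Fin n) ≃ₗᵢ[ℂ] EuclideanSpace ℂ (Fin n))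
    (u v u' v' : EuclideanSpace ℂ (Fin n)) :
    inner ℂ (tensorVec (U u) (V v)) (tensorVec (U u') (V v')) =
      inner ℂ (tensorVec u v) (tensorVec u' v') := by
  simp only [inner_tensorVec, LinearIsometryEquiv.inner_map_map]

theorem qlsOrthogonal_iff_orthonormal (Φ Ψ : Fin n → Fin n → EuclideanSpace ℂ (Fin n)) :
    QLSOrthogonal Φ Ψ ↔
      Orthonormal ℂ (fun p : Fin n × Fin n => tensorVec (Φ p.1 p.2) (Ψ p.1 p.2)) :=
  ⟨And.left, fun h => ⟨h, h.linearIndependent.span_eq_top_of_card_eq_finrank' (by simp)⟩⟩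

end TensorVec

theorem qls_orthogonal_iff_equiv_general (n : ℕ)
    (Φ Ψ Φ' Ψ' : Fin n → Fin n → EuclideanSpace ℂ (Fin n))
    (U V : EuclideanSpace ℂ (Fin n) ≃ₗᵢ[ℂ] EuclideanSpace ℂ (Fin n))
    (c d : Fin n → Fin n → ℂ)
    (hc : ∀ i j, ‖c i j‖ = 1) (hd : ∀ i j, ‖d i j‖ = 1)
    (σ τ : Equiv.Perm (Fin n))
    (hΦ'def : ∀ i j, Φ' i j = c i j • U (Φ (σ i) (τ j)))
    (hΨ'def : ∀ i j, Ψ' i j = d i j • V (Ψ (σ i) (τ j))) :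
    QLSOrthogonal Φ Ψ ↔ QLSOrthogonal Φ' Ψ' := by
  have hphase : ∀ p : Fin n × Fin n, ‖c p.1 p.2 * d p.1 p.2‖ = 1 := fun p => by
    rw [norm_mul, hc, hd, one_mul]
  have hΦΨ' : (fun p : Fin n × Fin n => tensorVec (Φ' p.1 p.2) (Ψ' p.1 p.2)) = fun p =>
      (c p.1 p.2 * d p.1 p.2) • tensorVec (U (Φ (σ p.1) (τ p.2))) (V (Ψ (σ p.1) (τ p.2))) := by
    funext p
    rw [hΦ'def, hΨ'def, tensorVec_smul_smul]
  rw [qlsOrthogonal_iff_orthonormal, qlsOrthogonal_iff_orthonormal, hΦΨ',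
    orthonormal_smul_iff_of_norm_eq_one hphase,
    orthonormal_iff_of_inner_eq fun p q => inner_tensorVec_map U V _ _ _ _]
  exact (orthonormal_comp_equiv_iff (Equiv.prodCongr σ τ)).symm

/-- Orthogonality of QLS is preserved by equivalences applied with the same pair of
permutations: if `|Φ′_ij⟩ = c_ij U|Φ_{σ(i),τ(j)}⟩` and `|Ψ′_ij⟩ = d_ij V|Ψ_{σ(i),τ(j)}⟩`,
then `Φ, Ψ` are orthogonal iff `Φ′, Ψ′` are orthogonal. -/
theorem qls_orthogonal_iff_equiv (n : ℕ)
    (Φ Ψ Φ' Ψ' : Fin n → Fin n → EuclideanSpace ℂ (Fin n))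
    (hΦ : IsQLS n Φ) (hΨ : IsQLS n Ψ) (hΦ' : IsQLS n Φ') (hΨ' : IsQLS n Ψ')
    (U V : EuclideanSpace ℂ (Fin n) ≃ₗᵢ[ℂ] EuclideanSpace ℂ (Fin n))
    (c d : Fin n → Fin n → ℂ)
    (hc : ∀ i j, ‖c i j‖ = 1) (hd : ∀ i j, ‖d i j‖ = 1)
    (σ τ : Equiv.Perm (Fin n))
    (hΦ'def : ∀ i j, Φ' i j = c i j • U (Φ (σ i) (τ j)))
    (hΨ'def : ∀ i j, Ψ' i j = d i j • V (Ψ (σ i) (τ j))) :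
    QLSOrthogonal Φ Ψ ↔ QLSOrthogonal Φ' Ψ' :=
  qls_orthogonal_iff_equiv_general n Φ Ψ Φ' Ψ' U V c d hc hd σ τ hΦ'def hΨ'def
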